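/- Let M be a compact metric space, f : M → M a homeomorphism, and let A : M → (ℝᵈ →L[ℝ] ℝᵈ) and u : M → ℝᵈ be continuous maps with sup_{x ∈ M} ‖A(x)‖ = k < 1. Then there exists a unique continuous map σ : M → ℝᵈ satisfying σ(f(x)) = A(x)·σ(x) + u(x) for all x ∈ M. -/
import Mathlib


theorem stmt_12 {M : Type*} [MetricSpace M] [CompactSpace M] (d : ℕ)
    (f : M ≃ₜ M)
    (A : M → ((Fin d → ℝ) →L[ℝ] (Fin d → ℝ))) (hA : Continuous A)
    (u : M → (Fin d → ℝ)) (hu : Continuous u)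
    (k : ℝ) (hk : k < 1) (hsup : ∀ x : M, ‖A x‖ ≤ k) :
    ∃! σ : M → (Fin d → ℝ),
      Continuous σ ∧ ∀ x : M, σ (f x) = A x (σ x) + u x := by
  rcases isEmpty_or_nonempty M with hM | hM
  · refine ⟨fun _ => 0, ⟨continuous_const, fun x => isEmptyElim x⟩,
      fun τ _ => funext fun x => isEmptyElim x⟩
  · have hk0 : (0 : ℝ) ≤ k := le_trans (norm_nonneg _) (hsup (Classical.arbitrary M))
    -- define the graph transform
    let T : C(M, Fin d → ℝ) → C(M, Fin d → ℝ) := fun σ =>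
      ⟨fun y => A (f.symm y) (σ (f.symm y)) + u (f.symm y), by
        fun_prop⟩
    have hT : ContractingWith ⟨k, hk0⟩ T := by
      constructor
      · exact_mod_cast hk
      · refine LipschitzWith.of_dist_le_mul fun σ τ => ?_
        refine (ContinuousMap.dist_le (by positivity)).2 fun y => ?_
        have : dist (T σ y) (T τ y)
            = ‖A (f.symm y) (σ (f.symm y)) - A (f.symm y) (τ (f.symm y))‖ := by
          simp [T, dist_eq_norm]
        rw [this, ← map_sub]
        calc ‖A (f.symm y) (σ (f.symm y) - τ (f.symm y))‖
            ≤ ‖A (f.symm y)‖ * ‖σ (f.symm y) - τ (f.symm y)‖ :=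
              (A (f.symm y)).le_opNorm _
          _ ≤ k * dist σ τ := by
              refine mul_le_mul (hsup _) ?_ (norm_nonneg _) hk0
              rw [← dist_eq_norm]
              exact ContinuousMap.dist_apply_le_dist _
    let σ₀ := hT.fixedPoint T
    have hfix : Function.IsFixedPt T σ₀ := hT.fixedPoint_isFixedPt
    have key : ∀ σ : C(M, Fin d → ℝ), Function.IsFixedPt T σ ↔
        ∀ x : M, σ (f x) = A x (σ x) + u x := by
      intro σ
      constructor
      · intro h x
        have := congrFun (congrArg (fun g : C(M, Fin d → ℝ) => (g : M → Fin d → ℝ)) h) (f x)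
        simpa [T] using this.symm
      · intro h
        ext y
        have := h (f.symm y)
        rw [f.apply_symm_apply] at this
        simp only [T, ContinuousMap.coe_mk, ← this]
    refine ⟨σ₀, ⟨σ₀.continuous, (key σ₀).1 hfix⟩, ?_⟩
    intro τ ⟨hτc, hτ⟩
    have : (⟨τ, hτc⟩ : C(M, Fin d → ℝ)) = σ₀ :=
      hT.fixedPoint_unique' ((key ⟨τ, hτc⟩).2 hτ) hfix
    exact congrArg (fun g : C(M, Fin d → ℝ) => (g : M → Fin d → ℝ)) this
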